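/- arXiv:2207.08921 — 2 statements merged into one kernel-verified Lean document; each statement's English description precedes it below -/
import Mathlib

section
/- There is no holomorphic self-map φ of the unit disk such that the composition operator C_φ f = f∘φ is an isometry from H^∞(𝔻) (sup norm) into the Bloch space 𝓑(𝔻) (norm |g(0)| + sup_z (1-|z|²)|g'(z)|). -/
open Metric Filter

/-- The open unit disk in ℂ. -/
noncomputable def unitDisk : Set ℂ := Metric.ball 0 1

/-- Supremum norm over the unit disk. -/
noncomputable def supNorm (f : ℂ → ℂ) : ℝ :=
  sSup ((fun z => ‖f z‖) '' unitDisk)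

/-- Bloch seminorm over the unit disk. -/
noncomputable def blochSemi (g : ℂ → ℂ) : ℝ :=
  sSup ((fun z => (1 - ‖z‖ ^ 2) * ‖deriv g z‖) '' unitDisk)

/-- Bloch norm over the unit disk. -/
noncomputable def blochNorm (g : ℂ → ℂ) : ℝ :=
  ‖g 0‖ + blochSemi g

/-!
If `C_φ` were an isometry, testing it on `z` and on `z - φ 0` (both compose with `φ` to functions
with the Bloch seminorm of `φ`, while their sup norms are `1` and `1 + ‖φ 0‖`) forces `φ 0 = 0`.
Testing it on `z ^ 2` then gives, by the Schwarz–Pick lemma `(1 - |z|²) |φ'(z)| ≤ 1 - |φ(z)|²`,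
`1 = sup (1 - |z|²) 2 |φ(z)| |φ'(z)| ≤ sup_{0 ≤ t < 1} 2t(1 - t²) = 4 / (3√3) < 1`.
The Schwarz–Pick lemma follows from the Schwarz lemma after composing `φ` on both sides with
disk automorphisms `z ↦ (a - z) / (1 - ā z)`.
-/

open Complex ComplexConjugate Set

noncomputable def mobius (a : ℂ) (z : ℂ) : ℂ := (a - z) / (1 - conj a * z)

namespace mobius

variable {a z : ℂ}

theorem apply_zero (a : ℂ) : mobius a 0 = a := by simp [mobius]

theorem apply_self (a : ℂ) : mobius a a = 0 := by simp [mobius]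

theorem one_sub_conj_mul_ne_zero (ha : ‖a‖ < 1) (hz : ‖z‖ ≤ 1) : 1 - conj a * z ≠ 0 := by
  refine sub_ne_zero.2 fun h => ?_
  have : ‖conj a * z‖ < 1 := by
    rw [norm_mul, RCLike.norm_conj]
    nlinarith [norm_nonneg a, norm_nonneg z]
  simp [← h] at this

theorem sq_norm_one_sub_conj_mul_sub_sq_norm_sub (a z : ℂ) :
    ‖1 - conj a * z‖ ^ 2 - ‖a - z‖ ^ 2 = (1 - ‖a‖ ^ 2) * (1 - ‖z‖ ^ 2) := by
  simp only [Complex.sq_norm, normSq_apply, sub_re, sub_im, one_re, one_im, mul_re, mul_im,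
    conj_re, conj_im]
  ring

theorem mapsTo_ball (ha : ‖a‖ < 1) : MapsTo (mobius a) (ball 0 1) (ball 0 1) := by
  intro z hz
  rw [mem_ball_zero_iff] at hz ⊢
  have hden := one_sub_conj_mul_ne_zero ha hz.le
  rw [mobius, norm_div, div_lt_one (norm_pos_iff.2 hden)]
  refine lt_of_pow_lt_pow_left₀ 2 (norm_nonneg _) ?_
  have ha2 : 0 < 1 - ‖a‖ ^ 2 := by nlinarith [norm_nonneg a]
  have hz2 : 0 < 1 - ‖z‖ ^ 2 := by nlinarith [norm_nonneg z]
  nlinarith [sq_norm_one_sub_conj_mul_sub_sq_norm_sub a z, mul_pos ha2 hz2]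

theorem hasDerivAt (ha : ‖a‖ < 1) (hz : ‖z‖ ≤ 1) :
    HasDerivAt (mobius a) ((‖a‖ ^ 2 - 1 : ℝ) / (1 - conj a * z) ^ 2) z := by
  have hden := one_sub_conj_mul_ne_zero ha hz
  refine (((hasDerivAt_id' z).const_sub a).div
    (((hasDerivAt_id' z).const_mul (conj a)).const_sub 1) hden).congr_deriv ?_
  push_cast
  rw [← conj_mul']
  ring

theorem hasDerivAt_zero (ha : ‖a‖ < 1) : HasDerivAt (mobius a) (‖a‖ ^ 2 - 1 : ℝ) 0 := by
  simpa using hasDerivAt ha (z := 0) (by simp)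

theorem hasDerivAt_self (ha : ‖a‖ < 1) : HasDerivAt (mobius a) ((‖a‖ ^ 2 - 1 : ℝ) : ℂ)⁻¹ a := by
  have h1 : (1 : ℂ) - conj a * a = -(‖a‖ ^ 2 - 1 : ℝ) := by rw [conj_mul']; push_cast; ring
  convert hasDerivAt ha ha.le using 1
  rw [h1, neg_sq]
  field_simp

theorem differentiableOn (ha : ‖a‖ < 1) : DifferentiableOn ℂ (mobius a) (ball 0 1) :=
  fun _z hz => (hasDerivAt ha (mem_ball_zero_iff.1 hz).le).differentiableAt.differentiableWithinAt

end mobius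

theorem norm_ofReal_sq_norm_sub_one {z : ℂ} (hz : ‖z‖ < 1) :
    ‖((‖z‖ ^ 2 - 1 : ℝ) : ℂ)‖ = 1 - ‖z‖ ^ 2 := by
  rw [norm_real, Real.norm_of_nonpos (by nlinarith [norm_nonneg z])]
  ring

theorem schwarz_pick_norm_deriv {φ : ℂ → ℂ} (hd : DifferentiableOn ℂ φ (ball 0 1))
    (hm : MapsTo φ (ball 0 1) (ball 0 1)) {z : ℂ} (hz : z ∈ ball (0 : ℂ) 1) :
    (1 - ‖z‖ ^ 2) * ‖deriv φ z‖ ≤ 1 - ‖φ z‖ ^ 2 := by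
  set w := φ z
  have hz' : ‖z‖ < 1 := mem_ball_zero_iff.1 hz
  have hw' : ‖w‖ < 1 := mem_ball_zero_iff.1 (hm hz)
  -- `g` is a self-map of the disk fixing `0`, so the Schwarz lemma gives `‖g' 0‖ ≤ 1`.
  set g := mobius w ∘ φ ∘ mobius z
  have hg : HasDerivAt g (((‖w‖ ^ 2 - 1 : ℝ) : ℂ)⁻¹ * (deriv φ z * (‖z‖ ^ 2 - 1 : ℝ))) 0 := by
    have hφ : HasDerivAt φ (deriv φ z) (mobius z 0) := by
      rw [mobius.apply_zero]
      exact (hd.differentiableAt (isOpen_ball.mem_nhds hz)).hasDerivAt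
    have hw : HasDerivAt (mobius w) ((‖w‖ ^ 2 - 1 : ℝ) : ℂ)⁻¹ ((φ ∘ mobius z) 0) := by
      rw [Function.comp_apply, mobius.apply_zero]
      exact mobius.hasDerivAt_self hw'
    exact hw.comp 0 (hφ.comp 0 (mobius.hasDerivAt_zero hz'))
  have hg0 : g 0 = 0 := by
    simp only [g, Function.comp_apply, mobius.apply_zero, w, mobius.apply_self]
  have hschwarz : ‖deriv g 0‖ ≤ 1 := by
    refine Complex.norm_deriv_le_one_of_mapsTo_ball ?_ ?_ one_pos
    · exact (mobius.differentiableOn hw').comp (hd.comp (mobius.differentiableOn hz')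
        (mobius.mapsTo_ball hz')) (hm.comp (mobius.mapsTo_ball hz'))
    · rw [hg0]
      exact ((mobius.mapsTo_ball hw').comp (hm.comp (mobius.mapsTo_ball hz'))).mono_right
        ball_subset_closedBall
  rw [hg.deriv, norm_mul, norm_mul, norm_inv, norm_ofReal_sq_norm_sub_one hz',
    norm_ofReal_sq_norm_sub_one hw', inv_mul_le_iff₀ (by nlinarith [norm_nonneg w])] at hschwarz
  linarith

theorem bddAbove_norm_image_unitDisk {f : ℂ → ℂ} (hf : Continuous f) :
    BddAbove ((fun z => ‖f z‖) '' unitDisk) :=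
  ((isCompact_closedBall (0 : ℂ) 1).image (continuous_norm.comp hf)).bddAbove.mono
    (image_mono ball_subset_closedBall)

theorem supNorm_le {f : ℂ → ℂ} {M : ℝ} (hM : 0 ≤ M) (hf : ∀ z ∈ unitDisk, ‖f z‖ ≤ M) :
    supNorm f ≤ M :=
  Real.sSup_le (forall_mem_image.2 hf) hM

theorem norm_le_supNorm {f : ℂ → ℂ} (hf : Continuous f) {w : ℂ} (hw : ‖w‖ ≤ 1) :
    ‖f w‖ ≤ supNorm f := by
  have hw : w ∈ closure unitDisk := by
    rwa [unitDisk, closure_ball _ one_ne_zero, mem_closedBall_zero_iff]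
  exact closure_minimal (fun _ hy => le_csSup (bddAbove_norm_image_unitDisk hf) hy) isClosed_Iic
    (mem_closure_image (continuous_norm.comp hf).continuousAt hw)

theorem blochNorm_comp_sub_const (φ : ℂ → ℂ) (c : ℂ) :
    blochNorm ((· - c) ∘ φ) = ‖φ 0 - c‖ + blochSemi φ := by
  simp only [blochNorm, blochSemi, Function.comp_def, deriv_sub_const]

theorem map_zero_eq_zero_of_blochNorm_comp_eq_supNorm {φ : ℂ → ℂ}
    (hiso : ∀ f : ℂ → ℂ, Differentiable ℂ f → blochNorm (f ∘ φ) = supNorm f) : φ 0 = 0 := by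
  have hid : ‖φ 0‖ + blochSemi φ ≤ 1 := by
    rw [← blochNorm, ← Function.id_comp φ, hiso id differentiable_id]
    exact supNorm_le zero_le_one fun z hz => by simpa using (mem_ball_zero_iff.1 hz).le
  have hsub : 1 + ‖φ 0‖ ≤ blochSemi φ := by
    -- the boundary point opposite to `φ 0`
    set u := -exp (arg (φ 0) * I)
    have hu : ‖u - φ 0‖ = 1 + ‖φ 0‖ := by
      conv_lhs => rw [← norm_mul_exp_arg_mul_I (φ 0)]
      rw [show u - ‖φ 0‖ * exp (arg (φ 0) * I) = -((1 + ‖φ 0‖ : ℝ) * exp (arg (φ 0) * I)) by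
        simp only [u]; push_cast; ring]
      rw [norm_neg, norm_mul, norm_exp_ofReal_mul_I, mul_one, norm_real,
        Real.norm_of_nonneg (by positivity)]
    have := hiso (· - φ 0) (differentiable_fun_id.sub_const (φ 0))
    rw [blochNorm_comp_sub_const, sub_self, norm_zero, zero_add] at this
    rw [this, ← hu]
    exact norm_le_supNorm (continuous_id.sub continuous_const) (by simp [norm_exp_ofReal_mul_I])
  exact norm_eq_zero.1 (by linarith [norm_nonneg (φ 0)])

theorem two_mul_mul_one_sub_sq_le {t : ℝ} (ht : 0 ≤ t) : 2 * t * (1 - t ^ 2) ≤ 4 / (3 * √3) := by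
  have hs : (√3) ^ 2 = 3 := Real.sq_sqrt (by norm_num)
  have key : 0 ≤ (√3 * t - 1) ^ 2 * (√3 * t + 2) := by positivity
  rw [le_div_iff₀ (by positivity)]
  -- `4 - 6√3 t (1 - t²) = 2 (√3 t - 1)² (√3 t + 2)` once `√3 ^ 2 = 3`
  linear_combination 2 * key + 2 * √3 * t ^ 3 * hs

theorem blochSemi_sq_comp_le {φ : ℂ → ℂ} (hd : DifferentiableOn ℂ φ unitDisk)
    (hm : MapsTo φ unitDisk unitDisk) : blochSemi ((· ^ 2) ∘ φ) ≤ 4 / (3 * √3) := by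
  refine Real.sSup_le (forall_mem_image.2 fun z hz => ?_) (by positivity)
  have hφ : HasDerivAt φ (deriv φ z) z := (hd.differentiableAt (isOpen_ball.mem_nhds hz)).hasDerivAt
  simp only [Function.comp_def, deriv_fun_pow hφ.differentiableAt, norm_mul, Nat.reduceSub,
    pow_one, Nat.cast_ofNat, RCLike.norm_ofNat]
  calc (1 - ‖z‖ ^ 2) * (2 * ‖φ z‖ * ‖deriv φ z‖)
      = 2 * ‖φ z‖ * ((1 - ‖z‖ ^ 2) * ‖deriv φ z‖) := by ring
    _ ≤ 2 * ‖φ z‖ * (1 - ‖φ z‖ ^ 2) := by gcongr; exact schwarz_pick_norm_deriv hd hm hz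
    _ ≤ 4 / (3 * √3) := two_mul_mul_one_sub_sq_le (norm_nonneg _)

theorem stmt_8 :
    ¬ ∃ φ : ℂ → ℂ, DifferentiableOn ℂ φ unitDisk ∧ Set.MapsTo φ unitDisk unitDisk ∧
      ∀ f : ℂ → ℂ, DifferentiableOn ℂ f unitDisk →
        BddAbove ((fun z => ‖f z‖) '' unitDisk) →
        blochNorm (f ∘ φ) = supNorm f := by
  rintro ⟨φ, hd, hm, hiso⟩
  replace hiso (f : ℂ → ℂ) (hf : Differentiable ℂ f) : blochNorm (f ∘ φ) = supNorm f :=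
    hiso f hf.differentiableOn (bddAbove_norm_image_unitDisk hf.continuous)
  have hsq := hiso (· ^ 2) (differentiable_pow 2)
  rw [blochNorm, Function.comp_apply, map_zero_eq_zero_of_blochNorm_comp_eq_supNorm hiso,
    zero_pow two_ne_zero, norm_zero, zero_add] at hsq
  have hlower : 1 ≤ supNorm (· ^ 2) := by
    simpa using norm_le_supNorm (continuous_pow 2) (norm_one (α := ℂ)).le
  have hupper := blochSemi_sq_comp_le hd hm
  have hconst : 4 / (3 * √3) < 1 := by
    rw [div_lt_one (by positivity)]
    nlinarith [Real.sq_sqrt (show (0 : ℝ) ≤ 3 by norm_num), Real.sqrt_nonneg 3]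
  linarith
end

section
/- Let ψ be holomorphic on 𝔻 and φ a holomorphic self-map of 𝔻. If ψ ∈ 𝓑(𝔻) and θ_{ψ,φ} := sup_{z∈𝔻} |ψ(z)|(1-|z|²)|φ'(z)|/(1-|φ(z)|²) < ∞, then for every f ∈ H^∞(𝔻), the function ψ·(f∘φ) belongs to 𝓑(𝔻) and ‖ψ(f∘φ)‖_𝓑 ≤ (‖ψ‖_𝓑 + θ_{ψ,φ})‖f‖_∞. -/
open Metric Filter

/-!
By the product rule, `(ψ (f ∘ φ))' = ψ' (f ∘ φ) + ψ (f' ∘ φ) φ'`. The first term is controlled by the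
Bloch seminorm of `ψ` and `‖f‖_∞`; for the second, the Schwarz–Pick estimate
`(1 - |w|²) |f'(w)| ≤ ‖f‖_∞` at `w = φ z` turns `(1 - |z|²) |ψ(z)| |f'(φ z)| |φ'(z)|` into at most
`θ ‖f‖_∞`. The Schwarz–Pick estimate itself is Cauchy's estimate at the origin applied to `f`
precomposed with the disk automorphism `ζ ↦ (ζ + w) / (1 + w̄ ζ)`.
-/

open Metric Filter Set Topology ComplexConjugate

lemma mem_unitDisk {z : ℂ} : z ∈ unitDisk ↔ ‖z‖ < 1 := mem_ball_zero_iff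

lemma zero_mem_unitDisk : (0 : ℂ) ∈ unitDisk := mem_ball_self one_pos

lemma one_sub_sq_norm_pos {z : ℂ} (hz : z ∈ unitDisk) : 0 < 1 - ‖z‖ ^ 2 := by
  have := mem_unitDisk.1 hz
  nlinarith [norm_nonneg z]

lemma DifferentiableOn.differentiableAt_of_mem_unitDisk {f : ℂ → ℂ}
    (hf : DifferentiableOn ℂ f unitDisk) {z : ℂ} (hz : z ∈ unitDisk) : DifferentiableAt ℂ f z :=
  hf.differentiableAt (isOpen_ball.mem_nhds hz)

/-- Cauchy's estimate on the circles of radius `r < 1`, in the limit `r → 1`. -/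
lemma norm_deriv_zero_le_of_norm_le {g : ℂ → ℂ} {M : ℝ} (hg : DifferentiableOn ℂ g unitDisk)
    (hM : ∀ z ∈ unitDisk, ‖g z‖ ≤ M) : ‖deriv g 0‖ ≤ M := by
  have hr : ∀ r ∈ Ioo (0 : ℝ) 1, ‖deriv g 0‖ * r ≤ M := by
    rintro r ⟨hr0, hr1⟩
    have hsub : closedBall (0 : ℂ) r ⊆ unitDisk := closedBall_subset_ball hr1
    have := Complex.norm_deriv_le_of_forall_mem_sphere_norm_le hr0 (hg.diffContOnCl_ball hsub)
      fun z hz => hM z (hsub (sphere_subset_closedBall hz))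
    rwa [le_div_iff₀ hr0] at this
  have htend : Tendsto (fun r : ℝ => ‖deriv g 0‖ * r) (𝓝[<] 1) (𝓝 ‖deriv g 0‖) := by
    simpa using ((continuous_const_mul ‖deriv g 0‖).tendsto 1).mono_left nhdsWithin_le_nhds
  exact le_of_tendsto htend (eventually_of_mem (Ioo_mem_nhdsLT zero_lt_one) hr)

noncomputable def diskAutomorphism (w ζ : ℂ) : ℂ := (ζ + w) / (1 + conj w * ζ)

lemma sq_norm_one_add_conj_mul_sub_sq_norm_add (w ζ : ℂ) :
    ‖1 + conj w * ζ‖ ^ 2 - ‖ζ + w‖ ^ 2 = (1 - ‖w‖ ^ 2) * (1 - ‖ζ‖ ^ 2) := by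
  simp only [Complex.sq_norm, Complex.normSq_apply, Complex.add_re, Complex.add_im,
    Complex.mul_re, Complex.mul_im, Complex.conj_re, Complex.conj_im, Complex.one_re,
    Complex.one_im]
  ring

lemma one_add_conj_mul_ne_zero {w ζ : ℂ} (hw : w ∈ unitDisk) (hζ : ζ ∈ unitDisk) :
    1 + conj w * ζ ≠ 0 := by
  intro h
  have hlt : ‖conj w * ζ‖ < 1 := by
    rw [norm_mul, Complex.norm_conj]
    exact mul_lt_one_of_nonneg_of_lt_one_left (norm_nonneg w) (mem_unitDisk.1 hw)
      (mem_unitDisk.1 hζ).le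
  rw [eq_neg_of_add_eq_zero_right h, norm_neg, norm_one] at hlt
  exact hlt.false

lemma mapsTo_diskAutomorphism {w : ℂ} (hw : w ∈ unitDisk) :
    MapsTo (diskAutomorphism w) unitDisk unitDisk := by
  intro ζ hζ
  have hden := norm_pos_iff.2 (one_add_conj_mul_ne_zero hw hζ)
  have hsq := sq_norm_one_add_conj_mul_sub_sq_norm_add w ζ
  have hprod := mul_pos (one_sub_sq_norm_pos hw) (one_sub_sq_norm_pos hζ)
  rw [mem_unitDisk, diskAutomorphism, norm_div, div_lt_one hden]
  nlinarith [norm_nonneg (ζ + w)]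

lemma differentiableOn_diskAutomorphism {w : ℂ} (hw : w ∈ unitDisk) :
    DifferentiableOn ℂ (diskAutomorphism w) unitDisk :=
  (differentiableOn_id.add_const w).div (differentiableOn_const 1 |>.add
    (differentiableOn_id.const_mul _)) fun _ hζ => one_add_conj_mul_ne_zero hw hζ

lemma diskAutomorphism_zero (w : ℂ) : diskAutomorphism w 0 = w := by
  simp [diskAutomorphism]

lemma hasDerivAt_diskAutomorphism_zero (w : ℂ) :
    HasDerivAt (diskAutomorphism w) ((1 - ‖w‖ ^ 2 : ℝ) : ℂ) 0 := by
  have hden : HasDerivAt (fun ζ : ℂ => 1 + conj w * ζ) (conj w) 0 := by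
    simpa using ((hasDerivAt_id (0 : ℂ)).const_mul (conj w)).const_add 1
  refine (((hasDerivAt_id (0 : ℂ)).add_const w).fun_div hden (by simp)).congr_deriv ?_
  simp [Complex.mul_conj']

theorem one_sub_sq_norm_mul_norm_deriv_le {f : ℂ → ℂ} {M : ℝ}
    (hf : DifferentiableOn ℂ f unitDisk) (hM : ∀ z ∈ unitDisk, ‖f z‖ ≤ M) {w : ℂ}
    (hw : w ∈ unitDisk) : (1 - ‖w‖ ^ 2) * ‖deriv f w‖ ≤ M := by
  have hmaps := mapsTo_diskAutomorphism hw
  have hchain : HasDerivAt (f ∘ diskAutomorphism w) (deriv f w * ((1 - ‖w‖ ^ 2 : ℝ) : ℂ)) 0 := by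
    have hfw := (hf.differentiableAt_of_mem_unitDisk hw).hasDerivAt
    rw [← diskAutomorphism_zero w] at hfw
    simpa only [diskAutomorphism_zero] using hfw.comp 0 (hasDerivAt_diskAutomorphism_zero w)
  have hcenter := norm_deriv_zero_le_of_norm_le
    (hf.comp (differentiableOn_diskAutomorphism hw) hmaps) fun z hz => hM _ (hmaps hz)
  rwa [hchain.deriv, norm_mul, Complex.norm_of_nonneg (one_sub_sq_norm_pos hw).le,
    mul_comm] at hcenter

lemma deriv_mul_comp {ψ φ f : ℂ → ℂ} {z : ℂ} (hψ : DifferentiableAt ℂ ψ z)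
    (hφ : DifferentiableAt ℂ φ z) (hf : DifferentiableAt ℂ f (φ z)) :
    deriv (fun w => ψ w * f (φ w)) z =
      deriv ψ z * f (φ z) + ψ z * (deriv f (φ z) * deriv φ z) :=
  (hψ.hasDerivAt.mul (hf.hasDerivAt.comp z hφ.hasDerivAt)).deriv

lemma one_sub_sq_norm_mul_norm_deriv_mul_comp_le {ψ φ f : ℂ → ℂ} {M : ℝ} {z : ℂ}
    (hz : z ∈ unitDisk) (hψ : DifferentiableAt ℂ ψ z) (hφ : DifferentiableAt ℂ φ z)
    (hφz : φ z ∈ unitDisk) (hf : DifferentiableOn ℂ f unitDisk)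
    (hM : ∀ w ∈ unitDisk, ‖f w‖ ≤ M) :
    (1 - ‖z‖ ^ 2) * ‖deriv (fun w => ψ w * f (φ w)) z‖ ≤
      (1 - ‖z‖ ^ 2) * ‖deriv ψ z‖ * M +
        ‖ψ z‖ * ((1 - ‖z‖ ^ 2) * ‖deriv φ z‖ / (1 - ‖φ z‖ ^ 2)) * M := by
  have hweight := one_sub_sq_norm_pos hz
  have hf' : ‖deriv f (φ z)‖ ≤ M / (1 - ‖φ z‖ ^ 2) := by
    rw [le_div_iff₀ (one_sub_sq_norm_pos hφz), mul_comm]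
    exact one_sub_sq_norm_mul_norm_deriv_le hf hM hφz
  rw [deriv_mul_comp hψ hφ (hf.differentiableAt_of_mem_unitDisk hφz)]
  calc (1 - ‖z‖ ^ 2) * ‖deriv ψ z * f (φ z) + ψ z * (deriv f (φ z) * deriv φ z)‖
      ≤ (1 - ‖z‖ ^ 2) * (‖deriv ψ z * f (φ z)‖ + ‖ψ z * (deriv f (φ z) * deriv φ z)‖) := by
        gcongr
        exact norm_add_le _ _
    _ = (1 - ‖z‖ ^ 2) * ‖deriv ψ z‖ * ‖f (φ z)‖ +
          ‖ψ z‖ * ((1 - ‖z‖ ^ 2) * ‖deriv φ z‖) * ‖deriv f (φ z)‖ := by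
        simp only [norm_mul]
        ring
    _ ≤ (1 - ‖z‖ ^ 2) * ‖deriv ψ z‖ * M +
          ‖ψ z‖ * ((1 - ‖z‖ ^ 2) * ‖deriv φ z‖) * (M / (1 - ‖φ z‖ ^ 2)) := by
        gcongr
        exact hM _ hφz
    _ = _ := by ring

theorem stmt_10 (ψ φ : ℂ → ℂ) (hψ : DifferentiableOn ℂ ψ unitDisk)
    (hφ : DifferentiableOn ℂ φ unitDisk) (hφm : Set.MapsTo φ unitDisk unitDisk)
    (hψB : BddAbove ((fun z => (1 - ‖z‖ ^ 2) * ‖deriv ψ z‖) '' unitDisk))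
    (θ : ℝ)
    (hθ : IsLUB {x : ℝ | ∃ z ∈ unitDisk, x = ‖ψ z‖ *
        ((1 - ‖z‖ ^ 2) * ‖deriv φ z‖ / (1 - ‖φ z‖ ^ 2))} θ) :
    ∀ f : ℂ → ℂ, DifferentiableOn ℂ f unitDisk →
      BddAbove ((fun z => ‖f z‖) '' unitDisk) →
      BddAbove ((fun z => (1 - ‖z‖ ^ 2) *
          ‖deriv (fun w => ψ w * f (φ w)) z‖) '' unitDisk) ∧
      blochNorm (fun w => ψ w * f (φ w)) ≤ (blochNorm ψ + θ) * supNorm f := by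
  intro f hf hfB
  set M := supNorm f
  have hfM : ∀ w ∈ unitDisk, ‖f w‖ ≤ M := fun w hw => le_csSup hfB (mem_image_of_mem _ hw)
  have hM : 0 ≤ M := (norm_nonneg _).trans (hfM 0 zero_mem_unitDisk)
  have hpointwise : ∀ z ∈ unitDisk,
      (1 - ‖z‖ ^ 2) * ‖deriv (fun w => ψ w * f (φ w)) z‖ ≤ (blochSemi ψ + θ) * M := by
    intro z hz
    have hψz : (1 - ‖z‖ ^ 2) * ‖deriv ψ z‖ ≤ blochSemi ψ := le_csSup hψB (mem_image_of_mem _ hz)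
    have hθz := hθ.1 ⟨z, hz, rfl⟩
    calc _ ≤ _ := one_sub_sq_norm_mul_norm_deriv_mul_comp_le hz
          (hψ.differentiableAt_of_mem_unitDisk hz) (hφ.differentiableAt_of_mem_unitDisk hz)
          (hφm hz) hf hfM
      _ ≤ blochSemi ψ * M + θ * M := by gcongr
      _ = (blochSemi ψ + θ) * M := by ring
  have hsemi : blochSemi (fun w => ψ w * f (φ w)) ≤ (blochSemi ψ + θ) * M :=
    csSup_le (Nonempty.image _ ⟨0, zero_mem_unitDisk⟩) (forall_mem_image.2 hpointwise)
  have hzero : ‖ψ 0 * f (φ 0)‖ ≤ ‖ψ 0‖ * M := by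
    rw [norm_mul]
    gcongr
    exact hfM _ (hφm zero_mem_unitDisk)
  refine ⟨⟨_, forall_mem_image.2 hpointwise⟩, ?_⟩
  calc blochNorm (fun w => ψ w * f (φ w)) ≤ ‖ψ 0‖ * M + (blochSemi ψ + θ) * M :=
        add_le_add hzero hsemi
    _ = (blochNorm ψ + θ) * M := by
        rw [blochNorm]
        ring
end
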